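/- arXiv:2110.14432 — 6 statements merged into one kernel-verified Lean document; each statement's English description precedes it below -/
import Mathlib

section
/- Teaching monotonicity (Proposition 1). Let E be a finite-dimensional real inner product space, w* ∈ E, η > 0, and for each index i ∈ Fin n and each label y in a nonempty label set Y let ℓ_i(y, ·) : E → ℝ be differentiable. Define G(i, y, w) = ‖w − η ∇_w ℓ_i(y, w) − w*‖². Let ỹ_i ∈ Y be the ground-truth labels and suppose there is a greedy label selection y* : Fin n × E → Y with G(i, y*(i, w), w) ≤ G(i, y, w) for all i, y, w. Let I_0, I_1, … be i.i.d. uniform random indices on Fin n, and from a common deterministic initialization w^0 define the LAST iterates w_l^{t+1} = w_l^t − η ∇_w ℓ_{I_t}(y*(I_t, w_l^t), w_l^t) and the SGD iterates w_s^{t+1} = w_s^t − η ∇_w ℓ_{I_t}(ỹ_{I_t}, w_s^t). Assume the monotonicity condition: for every t and every pair of random vectors W_1, W_2 that are measurable functions of the first t indices, if E‖W_1 − w*‖² ≤ E‖W_2 − w*‖² then E[G(I, ỹ_I, W_1)] ≤ E[G(I, ỹ_I, W_2)], where I is a fresh uniform index independent of the first t indices. Then for every T ≥ 0, E‖w_l^T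 − w*‖² ≤ E‖w_s^T − w*‖², i.e., in expectation the greedy LAST teacher converges to w* no slower than the random (SGD) teacher. -/
/-!
Induction on `T`. Averaging over the last index turns `E‖w^{T+1} − w*‖²` into the average of
`G(I, y, w^T)` with the label each teacher feeds. The greedy choice bounds the LAST average by
`E[G(I, ỹ_I, w_l^T)]`, and the monotonicity condition applied to the induction hypothesis bounds
that by `E[G(I, ỹ_I, w_s^T)]`, which is the SGD average.
-/

open scoped BigOperators RealInnerProductSpace

theorem Fin.sum_univ_fun_snoc {α M : Type*} [Fintype α] [AddCommMonoid M] {T : ℕ}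
    (f : (Fin (T + 1) → α) → M) :
    ∑ σ, f σ = ∑ σ : Fin T → α, ∑ a, f (Fin.snoc σ a) := by
  rw [← (Fin.snocEquiv fun _ => α).sum_comp, Fintype.sum_prod_type_right]
  rfl

theorem sum_comp_iterate_succ {α E M : Type*} [Fintype α] [AddCommMonoid M]
    (W : ∀ T : ℕ, (Fin T → α) → E) (step : α → E → E) (T : ℕ)
    (hW : ∀ σ : Fin (T + 1) → α, W (T + 1) σ = step (σ (Fin.last T)) (W T fun t => σ t.castSucc))
    (f : E → M) :
    ∑ σ, f (W (T + 1) σ) = ∑ σ, ∑ a, f (step a (W T σ)) := by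
  simp only [Fin.sum_univ_fun_snoc, hW, Fin.snoc_last, Fin.snoc_castSucc]

theorem teaching_monotonicity_general
    {E : Type*} [NormedAddCommGroup E] [InnerProductSpace ℝ E] [FiniteDimensional ℝ E]
    {Y : Type*}
    (n : ℕ)
    (ℓ : Fin n → Y → E → ℝ)
    (η : ℝ)
    (wstar w0 : E)
    (G : Fin n → Y → E → ℝ)
    (hG : ∀ i y w, G i y w = ‖w - η • gradient (ℓ i y) w - wstar‖ ^ 2)
    (ytil : Fin n → Y)
    (ystar : Fin n → E → Y)
    (hgreedy : ∀ i w y, G i (ystar i w) w ≤ G i y w)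
    (wl ws : ∀ T : ℕ, (Fin T → Fin n) → E)
    (hwl0 : ∀ σ : Fin 0 → Fin n, wl 0 σ = w0)
    (hws0 : ∀ σ : Fin 0 → Fin n, ws 0 σ = w0)
    (hwlS : ∀ (T : ℕ) (σ : Fin (T + 1) → Fin n),
      wl (T + 1) σ =
        wl T (fun t => σ t.castSucc) -
          η • gradient
            (ℓ (σ (Fin.last T)) (ystar (σ (Fin.last T)) (wl T (fun t => σ t.castSucc))))
            (wl T (fun t => σ t.castSucc)))
    (hwsS : ∀ (T : ℕ) (σ : Fin (T + 1) → Fin n),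
      ws (T + 1) σ =
        ws T (fun t => σ t.castSucc) -
          η • gradient (ℓ (σ (Fin.last T)) (ytil (σ (Fin.last T))))
            (ws T (fun t => σ t.castSucc)))
    (hmono : ∀ (t : ℕ) (W₁ W₂ : (Fin t → Fin n) → E),
      (∑ σ : Fin t → Fin n, ‖W₁ σ - wstar‖ ^ 2) / (n : ℝ) ^ t ≤
          (∑ σ : Fin t → Fin n, ‖W₂ σ - wstar‖ ^ 2) / (n : ℝ) ^ t →
        (∑ σ : Fin t → Fin n, ∑ i : Fin n, G i (ytil i) (W₁ σ)) / ((n : ℝ) ^ t * n) ≤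
          (∑ σ : Fin t → Fin n, ∑ i : Fin n, G i (ytil i) (W₂ σ)) / ((n : ℝ) ^ t * n)) :
    ∀ T : ℕ,
      (∑ σ : Fin T → Fin n, ‖wl T σ - wstar‖ ^ 2) / (n : ℝ) ^ T ≤
        (∑ σ : Fin T → Fin n, ‖ws T σ - wstar‖ ^ 2) / (n : ℝ) ^ T := by
  intro T
  induction T with
  | zero => simp [hwl0, hws0]
  | succ T ih =>
    rw [sum_comp_iterate_succ wl (fun i w => w - η • gradient (ℓ i (ystar i w)) w) T (hwlS T)
        (fun w => ‖w - wstar‖ ^ 2),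
      sum_comp_iterate_succ ws (fun i w => w - η • gradient (ℓ i (ytil i)) w) T (hwsS T)
        (fun w => ‖w - wstar‖ ^ 2)]
    simp only [← hG]
    rw [pow_succ]
    calc _ ≤ (∑ σ, ∑ i, G i (ytil i) (wl T σ)) / ((n : ℝ) ^ T * n) := by
          gcongr with σ _ i _
          exact hgreedy i (wl T σ) (ytil i)
      _ ≤ _ := hmono T (wl T) (ws T) ih

/-- **Teaching monotonicity (Proposition 1).** The greedy LAST teacher, which at each
iteration feeds a randomly drawn example with a label minimizing the one-step discrepancy
`G i y w = ‖w − η ∇ℓ_i(y, ·)(w) − w*‖²`, converges (in expectation over the i.i.d. uniform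
indices, here encoded as the uniform average over index sequences `σ : Fin T → Fin n`)
to `w*` no slower than the random (SGD) teacher feeding the ground-truth labels,
provided the monotonicity condition on `G` holds. -/
theorem teaching_monotonicity
    {E : Type*} [NormedAddCommGroup E] [InnerProductSpace ℝ E] [FiniteDimensional ℝ E]
    {Y : Type*} [Nonempty Y]
    (n : ℕ) (hn : 0 < n)
    (ℓ : Fin n → Y → E → ℝ)
    (hdiff : ∀ i y, Differentiable ℝ (ℓ i y))
    (η : ℝ) (hη : 0 < η)
    (wstar w0 : E)
    (G : Fin n → Y → E → ℝ)
    (hG : ∀ i y w, G i y w = ‖w - η • gradient (ℓ i y) w - wstar‖ ^ 2)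
    (ytil : Fin n → Y)
    (ystar : Fin n → E → Y)
    (hgreedy : ∀ i w y, G i (ystar i w) w ≤ G i y w)
    (wl ws : ∀ T : ℕ, (Fin T → Fin n) → E)
    (hwl0 : ∀ σ : Fin 0 → Fin n, wl 0 σ = w0)
    (hws0 : ∀ σ : Fin 0 → Fin n, ws 0 σ = w0)
    (hwlS : ∀ (T : ℕ) (σ : Fin (T + 1) → Fin n),
      wl (T + 1) σ =
        wl T (fun t => σ t.castSucc) -
          η • gradient
            (ℓ (σ (Fin.last T)) (ystar (σ (Fin.last T)) (wl T (fun t => σ t.castSucc))))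
            (wl T (fun t => σ t.castSucc)))
    (hwsS : ∀ (T : ℕ) (σ : Fin (T + 1) → Fin n),
      ws (T + 1) σ =
        ws T (fun t => σ t.castSucc) -
          η • gradient (ℓ (σ (Fin.last T)) (ytil (σ (Fin.last T))))
            (ws T (fun t => σ t.castSucc)))
    (hmono : ∀ (t : ℕ) (W₁ W₂ : (Fin t → Fin n) → E),
      (∑ σ : Fin t → Fin n, ‖W₁ σ - wstar‖ ^ 2) / (n : ℝ) ^ t ≤
          (∑ σ : Fin t → Fin n, ‖W₂ σ - wstar‖ ^ 2) / (n : ℝ) ^ t →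
        (∑ σ : Fin t → Fin n, ∑ i : Fin n, G i (ytil i) (W₁ σ)) / ((n : ℝ) ^ t * n) ≤
          (∑ σ : Fin t → Fin n, ∑ i : Fin n, G i (ytil i) (W₂ σ)) / ((n : ℝ) ^ t * n)) :
    ∀ T : ℕ,
      (∑ σ : Fin T → Fin n, ‖wl T σ - wstar‖ ^ 2) / (n : ℝ) ^ T ≤
        (∑ σ : Fin T → Fin n, ‖ws T σ - wstar‖ ^ 2) / (n : ℝ) ^ T :=
  teaching_monotonicity_general n ℓ η wstar w0 G hG ytil ystar hgreedy wl ws hwl0 hws0 hwlS hwsS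
    hmono
end

section
/- One-step contraction for greedy label-rescaled gradient steps (key step of Theorem 1). Let E be a finite-dimensional real inner product space and ℓ : E → ℝ a differentiable function that is order-1 μ-strongly convex with μ ≥ 0, i.e. ℓ(v) ≥ ℓ(u) + ⟨∇ℓ(u), v − u⟩ + (μ/2)‖v − u‖ for all u, v ∈ E. Let w, w* ∈ E satisfy ℓ(w*) ≤ ℓ(w), let ‖∇ℓ(w)‖ ≤ L, and let η > 0 and c_1 > 0. Then the rescaled gradient step w⁺ = w − η c_1 ‖w − w*‖ ∇ℓ(w) satisfies ‖w⁺ − w*‖² ≤ (1 − μ η c_1 + η² c_1² L²) ‖w − w*‖². -/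
/-!
Expand the square of the step. Order-1 strong convexity from `w` towards `w*`, together with
`ℓ(w*) ≤ ℓ(w)`, gives `⟪∇ℓ(w), w - w*⟫ ≥ (μ/2)‖w - w*‖`; since the step length
`η c₁ ‖w - w*‖` carries another factor `‖w - w*‖`, the cross term becomes
`μ η c₁ ‖w - w*‖²`, and the remaining term is at most `η² c₁² L² ‖w - w*‖²`.
-/

open scoped RealInnerProductSpace

section

variable {E : Type*} [NormedAddCommGroup E] [InnerProductSpace ℝ E]

theorem norm_sub_smul_sub_sq (u v g : E) (s : ℝ) :
    ‖(u - s • g) - v‖ ^ 2 = ‖u - v‖ ^ 2 - 2 * s * ⟪g, u - v⟫ + s ^ 2 * ‖g‖ ^ 2 := by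
  rw [show (u - s • g) - v = (u - v) - s • g by abel, norm_sub_sq_real, real_inner_smul_right,
    norm_smul, mul_pow, Real.norm_eq_abs, sq_abs, real_inner_comm]
  ring

theorem norm_sub_smul_sub_sq_le {u v g : E} {s m L : ℝ} (hs : 0 ≤ s)
    (hm : m ≤ ⟪g, u - v⟫) (hL : ‖g‖ ≤ L) :
    ‖(u - s • g) - v‖ ^ 2 ≤ ‖u - v‖ ^ 2 - 2 * s * m + s ^ 2 * L ^ 2 := by
  have hcross : 2 * s * m ≤ 2 * s * ⟪g, u - v⟫ := by gcongr
  have hsq : s ^ 2 * ‖g‖ ^ 2 ≤ s ^ 2 * L ^ 2 := by gcongr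
  rw [norm_sub_smul_sub_sq]
  linarith

theorem half_mul_norm_sub_le_inner_of_le {ℓ : E → ℝ} {u v g : E} {μ : ℝ}
    (hsc : ℓ v ≥ ℓ u + ⟪g, v - u⟫ + (μ / 2) * ‖v - u‖) (hle : ℓ v ≤ ℓ u) :
    μ / 2 * ‖u - v‖ ≤ ⟪g, u - v⟫ := by
  rw [← neg_sub u v, inner_neg_right, norm_neg] at hsc
  linarith

end

theorem one_step_contraction_greedy_last_general
    {E : Type*} [NormedAddCommGroup E] [InnerProductSpace ℝ E] [FiniteDimensional ℝ E]
    (ℓ : E → ℝ)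
    (μ : ℝ)
    (hsc : ∀ u v : E, ℓ v ≥ ℓ u + ⟪gradient ℓ u, v - u⟫ + (μ / 2) * ‖v - u‖)
    (w wstar : E) (hws : ℓ wstar ≤ ℓ w)
    (L : ℝ) (hL : ‖gradient ℓ w‖ ≤ L)
    (η c₁ : ℝ) (hη : 0 < η) (hc₁ : 0 < c₁) :
    ‖(w - (η * c₁ * ‖w - wstar‖) • gradient ℓ w) - wstar‖ ^ 2 ≤
      (1 - μ * η * c₁ + η ^ 2 * c₁ ^ 2 * L ^ 2) * ‖w - wstar‖ ^ 2 := by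
  have hinner := half_mul_norm_sub_le_inner_of_le (hsc w wstar) hws
  calc _ ≤ ‖w - wstar‖ ^ 2 - 2 * (η * c₁ * ‖w - wstar‖) * (μ / 2 * ‖w - wstar‖)
          + (η * c₁ * ‖w - wstar‖) ^ 2 * L ^ 2 :=
        norm_sub_smul_sub_sq_le (by positivity) hinner hL
    _ = _ := by ring

/-- **One-step contraction for greedy label-rescaled gradient steps (key step of Theorem 1).**
For an order-1 `μ`-strongly convex differentiable loss `ℓ` with `ℓ(w*) ≤ ℓ(w)` and
`‖∇ℓ(w)‖ ≤ L`, the rescaled gradient step `w⁺ = w − η c₁ ‖w − w*‖ ∇ℓ(w)` satisfies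
`‖w⁺ − w*‖² ≤ (1 − μ η c₁ + η² c₁² L²) ‖w − w*‖²`. -/
theorem one_step_contraction_greedy_last
    {E : Type*} [NormedAddCommGroup E] [InnerProductSpace ℝ E] [FiniteDimensional ℝ E]
    (ℓ : E → ℝ) (hdiff : Differentiable ℝ ℓ)
    (μ : ℝ) (hμ : 0 ≤ μ)
    (hsc : ∀ u v : E, ℓ v ≥ ℓ u + ⟪gradient ℓ u, v - u⟫ + (μ / 2) * ‖v - u‖)
    (w wstar : E) (hws : ℓ wstar ≤ ℓ w)
    (L : ℝ) (hL : ‖gradient ℓ w‖ ≤ L)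
    (η c₁ : ℝ) (hη : 0 < η) (hc₁ : 0 < c₁) :
    ‖(w - (η * c₁ * ‖w - wstar‖) • gradient ℓ w) - wstar‖ ^ 2 ≤
      (1 - μ * η * c₁ + η ^ 2 * c₁ ^ 2 * L ^ 2) * ‖w - wstar‖ ^ 2 :=
  one_step_contraction_greedy_last_general ℓ μ hsc w wstar hws L hL η c₁ hη hc₁
end

section
/- Exponential teachability (Theorem 1). Let E be a finite-dimensional real inner product space and ℓ_i : E → ℝ for i ∈ Fin n be differentiable functions such that each ℓ_i is L_i-Lipschitz (hence ‖∇ℓ_i(u)‖ ≤ L_i for all u) and order-1 μ_i-strongly convex with μ_i ≥ 0, i.e. ℓ_i(v) ≥ ℓ_i(u) + ⟨∇ℓ_i(u), v − u⟩ + (μ_i/2)‖v − u‖ for all u, v. Assume the interpolation condition: w* ∈ E satisfies ℓ_i(w*) ≤ ℓ_i(u) for every u ∈ E and every i. Let η > 0, c_1 > 0, let I_0, I_1, … be i.i.d. uniform random indices on Fin n, and from a deterministic initialization w^0 define w^{t+1} = w^t − η c_1 ‖w^t − w*‖ ∇ℓ_{I_t}(w^t). Set μ̄ = (1/n) Σ_{i}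 μ_i and L_max = max_i L_i. Then for every T ≥ 0, E‖w^T − w*‖² ≤ (1 − c_1 η μ̄ + c_1² η² L_max²)^T ‖w^0 − w*‖². -/
open scoped BigOperators RealInnerProductSpace

/-!
Strong convexity towards the common minimizer `w*` gives `⟪∇ℓᵢ(u), u - w*⟫ ≥ (μᵢ/2)‖u - w*‖`.
Since the teacher scales the step by `‖u - w*‖`, expanding the square shows that one step with
index `i` multiplies `‖u - w*‖²` by at most `ρᵢ = 1 - c₁ημᵢ + c₁²η²L_max²`. Averaging over the
uniformly drawn index multiplies the expected squared distance by the mean `ρ` of the `ρᵢ`, and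
iterating gives the factor `ρ^T`.
-/

theorem Fin.sum_pi_succ_eq_sum_sum_snoc {α M : Type*} [Fintype α] [AddCommMonoid M] (T : ℕ)
    (f : (Fin (T + 1) → α) → M) :
    ∑ σ : Fin (T + 1) → α, f σ = ∑ a : α, ∑ σ : Fin T → α, f (Fin.snoc σ a) := by
  rw [← Fintype.sum_prod_type']
  exact (Fintype.sum_equiv (Fin.snocEquiv fun _ => α) _ _ fun _ => rfl).symm

-- No sign condition on `c` is needed: `c < 0` forces `S = 0`.
theorem le_pow_mul_of_le_mul {R : Type*} [CommRing R] [LinearOrder R] [IsStrictOrderedRing R]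
    {S : ℕ → R} {c : R} (hS : ∀ T, 0 ≤ S T) (hstep : ∀ T, S (T + 1) ≤ c * S T) (T : ℕ) :
    S T ≤ c ^ T * S 0 := by
  rcases le_or_gt 0 c with hc | hc
  · induction T with
    | zero => simp
    | succ T ih =>
      calc S (T + 1) ≤ c * S T := hstep T
        _ ≤ c * (c ^ T * S 0) := mul_le_mul_of_nonneg_left ih hc
        _ = c ^ (T + 1) * S 0 := by ring
  · have hzero : ∀ T, S T = 0 := fun T =>
      le_antisymm (nonpos_of_mul_nonneg_right ((hS (T + 1)).trans (hstep T)) hc) (hS T)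
    simp [hzero]

theorem sum_pi_le_pow_mul_of_snoc_le {α : Type*} [Fintype α] {V : ∀ T : ℕ, (Fin T → α) → ℝ}
    {ρ : α → ℝ} (hV : ∀ T σ, 0 ≤ V T σ)
    (hstep : ∀ T (σ : Fin T → α) a, V (T + 1) (Fin.snoc σ a) ≤ ρ a * V T σ) (T : ℕ) :
    ∑ σ, V T σ ≤ (∑ a, ρ a) ^ T * ∑ σ : Fin 0 → α, V 0 σ := by
  refine le_pow_mul_of_le_mul (S := fun T => ∑ σ, V T σ)
    (fun T => Finset.sum_nonneg fun σ _ => hV T σ) (fun T => ?_) T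
  calc ∑ σ, V (T + 1) σ = ∑ a, ∑ σ, V (T + 1) (Fin.snoc σ a) :=
        Fin.sum_pi_succ_eq_sum_sum_snoc T _
    _ ≤ ∑ a, ∑ σ, ρ a * V T σ :=
      Finset.sum_le_sum fun a _ => Finset.sum_le_sum fun σ _ => hstep T σ a
    _ = (∑ a, ρ a) * ∑ σ, V T σ := by simp only [← Finset.mul_sum, Finset.sum_mul]

section GradientStep

variable {E : Type*} [NormedAddCommGroup E] [InnerProductSpace ℝ E]

theorem half_mul_norm_le_inner_of_strongConvex_of_le {f : E → ℝ} {g u w : E} {μ : ℝ}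
    (hsc : f w ≥ f u + ⟪g, w - u⟫ + μ / 2 * ‖w - u‖) (hmin : f w ≤ f u) :
    μ / 2 * ‖u - w‖ ≤ ⟪g, u - w⟫ := by
  rw [← neg_sub u w, inner_neg_right, norm_neg] at hsc
  linarith

theorem norm_sub_smul_sq_le {d g : E} {a μ L : ℝ} (ha : 0 ≤ a)
    (hinner : μ / 2 * ‖d‖ ≤ ⟪g, d⟫) (hg : ‖g‖ ≤ L) :
    ‖d - (a * ‖d‖) • g‖ ^ 2 ≤ (1 - a * μ + a ^ 2 * L ^ 2) * ‖d‖ ^ 2 := by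
  have hs : 0 ≤ a * ‖d‖ := by positivity
  have hg2 : ‖g‖ ^ 2 ≤ L ^ 2 := pow_le_pow_left₀ (norm_nonneg g) hg 2
  rw [norm_sub_sq_real, real_inner_smul_right, real_inner_comm, norm_smul, mul_pow,
    Real.norm_eq_abs, sq_abs]
  nlinarith [mul_le_mul_of_nonneg_left hinner hs,
    mul_le_mul_of_nonneg_left hg2 (sq_nonneg (a * ‖d‖))]

end GradientStep

theorem exponential_teachability_general
    {E : Type*} [NormedAddCommGroup E] [InnerProductSpace ℝ E] [FiniteDimensional ℝ E]
    (n : ℕ) (hn : 0 < n)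
    (ℓ : Fin n → E → ℝ)
    (L : Fin n → ℝ)
    (hgradbound : ∀ i (u : E), ‖gradient (ℓ i) u‖ ≤ L i)
    (μ : Fin n → ℝ)
    (hsc : ∀ i (u v : E),
      ℓ i v ≥ ℓ i u + ⟪gradient (ℓ i) u, v - u⟫ + (μ i / 2) * ‖v - u‖)
    (wstar : E) (hinterp : ∀ i (u : E), ℓ i wstar ≤ ℓ i u)
    (η c₁ : ℝ) (hη : 0 < η) (hc₁ : 0 < c₁)
    (w0 : E)
    (w : ∀ T : ℕ, (Fin T → Fin n) → E)
    (hw0 : ∀ σ : Fin 0 → Fin n, w 0 σ = w0)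
    (hwS : ∀ (T : ℕ) (σ : Fin (T + 1) → Fin n),
      w (T + 1) σ =
        w T (fun t => σ t.castSucc) -
          (η * c₁ * ‖w T (fun t => σ t.castSucc) - wstar‖) •
            gradient (ℓ (σ (Fin.last T))) (w T (fun t => σ t.castSucc)))
    (μbar Lmax : ℝ)
    (hμbar : μbar = (∑ i, μ i) / n)
    (hLmax : Lmax = Finset.univ.sup' ⟨⟨0, hn⟩, Finset.mem_univ _⟩ L) :
    ∀ T : ℕ,
      (∑ σ : Fin T → Fin n, ‖w T σ - wstar‖ ^ 2) / (n : ℝ) ^ T ≤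
        (1 - c₁ * η * μbar + c₁ ^ 2 * η ^ 2 * Lmax ^ 2) ^ T * ‖w0 - wstar‖ ^ 2 := by
  intro T
  have hstep : ∀ T (σ : Fin T → Fin n) i, ‖w (T + 1) (Fin.snoc σ i) - wstar‖ ^ 2 ≤
      (1 - c₁ * η * μ i + c₁ ^ 2 * η ^ 2 * Lmax ^ 2) * ‖w T σ - wstar‖ ^ 2 := by
    intro T σ i
    have hL : ‖gradient (ℓ i) (w T σ)‖ ≤ Lmax :=
      (hgradbound i _).trans (hLmax ▸ Finset.le_sup' L (Finset.mem_univ i))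
    rw [hwS]
    simp only [Fin.snoc_castSucc, Fin.snoc_last]
    rw [sub_right_comm, mul_comm η c₁, ← mul_pow]
    exact norm_sub_smul_sq_le (by positivity)
      (half_mul_norm_le_inner_of_strongConvex_of_le (hsc i _ wstar) (hinterp i _)) hL
  have hρsum : ∑ i, (1 - c₁ * η * μ i + c₁ ^ 2 * η ^ 2 * Lmax ^ 2) =
      n * (1 - c₁ * η * μbar + c₁ ^ 2 * η ^ 2 * Lmax ^ 2) := by
    have hnR : (n : ℝ) ≠ 0 := by positivity
    simp only [Finset.sum_add_distrib, Finset.sum_sub_distrib, ← Finset.mul_sum,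
      Finset.sum_const, Finset.card_univ, Fintype.card_fin, nsmul_eq_mul, hμbar]
    field_simp
  have hbound := sum_pi_le_pow_mul_of_snoc_le (fun T σ => sq_nonneg ‖w T σ - wstar‖) hstep T
  rw [hρsum, mul_pow] at hbound
  simp only [Finset.univ_unique, Finset.sum_singleton, hw0] at hbound
  rw [div_le_iff₀ (by positivity)]
  linarith

/-- **Exponential teachability (Theorem 1).** For differentiable losses `ℓ_i` that are
`L_i`-Lipschitz (hence `‖∇ℓ_i(u)‖ ≤ L_i`) and order-1 `μ_i`-strongly convex, under the
interpolation condition that `w*` minimizes every `ℓ_i`, the label-rescaled stochastic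
gradient iteration `w^{t+1} = w^t − η c₁ ‖w^t − w*‖ ∇ℓ_{I_t}(w^t)` with i.i.d. uniform
indices (encoded as the uniform average over index sequences `σ : Fin T → Fin n`)
satisfies `E‖w^T − w*‖² ≤ (1 − c₁ η μ̄ + c₁² η² L_max²)^T ‖w^0 − w*‖²`. -/
theorem exponential_teachability
    {E : Type*} [NormedAddCommGroup E] [InnerProductSpace ℝ E] [FiniteDimensional ℝ E]
    (n : ℕ) (hn : 0 < n)
    (ℓ : Fin n → E → ℝ) (hdiff : ∀ i, Differentiable ℝ (ℓ i))
    (L : Fin n → ℝ)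
    (hlip : ∀ i (u v : E), |ℓ i u - ℓ i v| ≤ L i * ‖u - v‖)
    (hgradbound : ∀ i (u : E), ‖gradient (ℓ i) u‖ ≤ L i)
    (μ : Fin n → ℝ) (hμ : ∀ i, 0 ≤ μ i)
    (hsc : ∀ i (u v : E),
      ℓ i v ≥ ℓ i u + ⟪gradient (ℓ i) u, v - u⟫ + (μ i / 2) * ‖v - u‖)
    (wstar : E) (hinterp : ∀ i (u : E), ℓ i wstar ≤ ℓ i u)
    (η c₁ : ℝ) (hη : 0 < η) (hc₁ : 0 < c₁)
    (w0 : E)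
    (w : ∀ T : ℕ, (Fin T → Fin n) → E)
    (hw0 : ∀ σ : Fin 0 → Fin n, w 0 σ = w0)
    (hwS : ∀ (T : ℕ) (σ : Fin (T + 1) → Fin n),
      w (T + 1) σ =
        w T (fun t => σ t.castSucc) -
          (η * c₁ * ‖w T (fun t => σ t.castSucc) - wstar‖) •
            gradient (ℓ (σ (Fin.last T))) (w T (fun t => σ t.castSucc)))
    (μbar Lmax : ℝ)
    (hμbar : μbar = (∑ i, μ i) / n)
    (hLmax : Lmax = Finset.univ.sup' ⟨⟨0, hn⟩, Finset.mem_univ _⟩ L) :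
    ∀ T : ℕ,
      (∑ σ : Fin T → Fin n, ‖w T σ - wstar‖ ^ 2) / (n : ℝ) ^ T ≤
        (1 - c₁ * η * μbar + c₁ ^ 2 * η ^ 2 * Lmax ^ 2) ^ T * ‖w0 - wstar‖ ^ 2 :=
  exponential_teachability_general n hn ℓ L hgradbound μ hsc wstar hinterp η c₁ hη hc₁ w0 w hw0 hwS
    μbar Lmax hμbar hLmax
end

section
/- One-step quadratic contraction for the generalized Newton update (key step of Theorem 3). Let E be a finite-dimensional real inner product space, δ > 0, w* ∈ E, and let f : E → ℝ be twice continuously differentiable on the closed ball B̄(w*, δ) with ∇f(w*) = 0. Let H(u) denote the Hessian of f at u (the derivative at u of the gradient map ∇f, viewed as a continuous linear operator on E), and assume H is L-Lipschitz on B̄(w*, δ) in operator norm: ‖H(u) − H(v)‖ ≤ L‖u − v‖. Fix α ∈ [0,1], let w ∈ B̄(w*, δ), and suppose the operator A = H(αw* + (1−α)w) is invertible with operator norm ‖A^{-1}‖ ≤ μ. Then the generalized Newton step w⁺ = w − A^{-1}(∇f(w)) satisfies ‖w⁺ − w*‖ ≤ (μ L ((1−α)² + α²)/2) ‖w − w*‖².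 -/
/-!
Write `β = 1 - α` and `d = w - w*`, so that `A = H(γ β)` on the segment `γ t = w* + t • d`.
Since `∇f(w*) = 0`, the Newton error is `-A⁻¹ (∇f(w) - ∇f(w*) - A d)`, and the residual is the
increment of `t ↦ ∇f(γ t) - t • A d` over `[0, 1]`, whose derivative `(H(γ t) - H(γ β)) d` has norm
at most `L‖d‖²|t - β|` by the Lipschitz bound. Comparing it with the antiderivative
`L‖d‖²(β² + (t - β)|t - β|)/2` of that bound gives `L‖d‖²(α² + β²)/2`.
-/

section

open Set

theorem hasDerivAt_mul_abs (x : ℝ) : HasDerivAt (fun t : ℝ => t * |t|) (2 * |x|) x := by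
  refine hasDerivAt_of_hasDerivAt_of_ne' (x := 0) (fun y hy => ?_)
    (continuous_id.mul continuous_abs).continuousAt
    (continuous_const.mul continuous_abs).continuousAt x
  refine ((hasDerivAt_id' y).mul (hasDerivAt_abs hy)).congr_deriv ?_
  rcases hy.lt_or_gt with hy | hy
  · simp [sign_neg hy, abs_of_neg hy]; ring
  · simp [sign_pos hy, abs_of_pos hy]; ring

variable {F : Type*} [NormedAddCommGroup F] [NormedSpace ℝ F]

theorem norm_sub_sub_le_of_norm_deriv_sub_le_mul_abs {φ φ' : ℝ → F} {v : F} {C b : ℝ}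
    (hb : b ∈ Icc (0 : ℝ) 1) (hφ : ∀ t ∈ Icc (0 : ℝ) 1, HasDerivAt φ (φ' t) t)
    (bound : ∀ t ∈ Icc (0 : ℝ) 1, ‖φ' t - v‖ ≤ C * |t - b|) :
    ‖φ 1 - φ 0 - v‖ ≤ C * (b ^ 2 + (1 - b) ^ 2) / 2 := by
  have hψ (t : ℝ) (ht : t ∈ Icc (0 : ℝ) 1) :
      HasDerivAt (fun s => φ s - φ 0 - s • v) (φ' t - v) t :=
    (((hφ t ht).sub_const (φ 0)).sub ((hasDerivAt_id' t).smul_const v)).congr_deriv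
      (by rw [one_smul])
  have hB (t : ℝ) :
      HasDerivAt (fun s => C * (b ^ 2 + (s - b) * |s - b|) / 2) (C * |t - b|) t :=
    ((((hasDerivAt_mul_abs (t - b)).comp t ((hasDerivAt_id' t).sub_const b)).const_add
      (b ^ 2)).const_mul C).div_const 2 |>.congr_deriv (by ring)
  have := image_norm_le_of_norm_deriv_right_le_deriv_boundary
    (fun t ht => (hψ t ht).continuousAt.continuousWithinAt)
    (fun t ht => (hψ t (Ico_subset_Icc_self ht)).hasDerivWithinAt)
    (by simp [sq, abs_of_nonneg hb.1]) hB
    (fun t ht => bound t (Ico_subset_Icc_self ht)) (right_mem_Icc.2 zero_le_one)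
  rwa [one_smul, abs_of_nonneg (sub_nonneg.2 hb.2), ← sq] at this

variable {E : Type*} [NormedAddCommGroup E] [NormedSpace ℝ E]

theorem Convex.norm_image_sub_sub_fderiv_smul_add_smul_le {s : Set E} (hs : Convex ℝ s)
    {g : E → F} {g' : E → E →L[ℝ] F} {L : ℝ} (hg : ∀ u ∈ s, HasFDerivAt g (g' u) u)
    (hLip : ∀ u ∈ s, ∀ v ∈ s, ‖g' u - g' v‖ ≤ L * ‖u - v‖) {x y : E} (hx : x ∈ s) (hy : y ∈ s)
    {a b : ℝ} (ha : 0 ≤ a) (hb : 0 ≤ b) (hab : a + b = 1) :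
    ‖g y - g x - g' (a • x + b • y) (y - x)‖ ≤ L * (a ^ 2 + b ^ 2) / 2 * ‖y - x‖ ^ 2 := by
  obtain rfl : a = 1 - b := eq_sub_of_add_eq hab
  set d := y - x
  set γ : ℝ → E := fun t => x + t • d
  have hγs (t : ℝ) (ht : t ∈ Icc (0 : ℝ) 1) : γ t ∈ s := hs.add_smul_sub_mem hx hy ht
  have hb1 : b ∈ Icc (0 : ℝ) 1 := ⟨hb, by linarith⟩
  have hγb : (1 - b) • x + b • y = γ b := by
    simp only [γ, d]; module
  have hderiv (t : ℝ) (ht : t ∈ Icc (0 : ℝ) 1) : HasDerivAt (g ∘ γ) (g' (γ t) d) t :=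
    (hg (γ t) (hγs t ht)).comp_hasDerivAt t (((hasDerivAt_id' t).smul_const d).const_add x
      |>.congr_deriv (one_smul ℝ d))
  have bound (t : ℝ) (ht : t ∈ Icc (0 : ℝ) 1) :
      ‖g' (γ t) d - g' (γ b) d‖ ≤ L * ‖d‖ ^ 2 * |t - b| :=
    calc ‖g' (γ t) d - g' (γ b) d‖ ≤ ‖g' (γ t) - g' (γ b)‖ * ‖d‖ :=
          (g' (γ t) - g' (γ b)).le_opNorm d
      _ ≤ L * ‖γ t - γ b‖ * ‖d‖ :=
          mul_le_mul_of_nonneg_right (hLip _ (hγs t ht) _ (hγs b hb1)) (norm_nonneg d)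
      _ = L * ‖d‖ ^ 2 * |t - b| := by
          rw [show γ t - γ b = (t - b) • d by simp only [γ]; module, norm_smul,
            Real.norm_eq_abs]
          ring
  have := norm_sub_sub_le_of_norm_deriv_sub_le_mul_abs hb1 hderiv bound
  simp only [Function.comp_apply, γ, one_smul, zero_smul, add_zero, d, add_sub_cancel] at this
  rw [hγb]
  exact this.trans_eq (by ring)

end

theorem generalized_newton_one_step_general
    {E : Type*} [NormedAddCommGroup E] [InnerProductSpace ℝ E] [FiniteDimensional ℝ E]
    (δ : ℝ) (wstar : E) (f : E → ℝ)
    (H : E → E →L[ℝ] E)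
    (hH : ∀ u ∈ Metric.closedBall wstar δ, HasFDerivAt (gradient f) (H u) u)
    (hgrad0 : gradient f wstar = 0)
    (L : ℝ)
    (hLip : ∀ u ∈ Metric.closedBall wstar δ, ∀ v ∈ Metric.closedBall wstar δ,
      ‖H u - H v‖ ≤ L * ‖u - v‖)
    (α : ℝ) (hα : α ∈ Set.Icc (0 : ℝ) 1)
    (w : E) (hw : w ∈ Metric.closedBall wstar δ)
    (A : E →L[ℝ] E) (hA : A = H (α • wstar + (1 - α) • w))
    (Ainv : E →L[ℝ] E)
    (hAinv₁ : Ainv.comp A = ContinuousLinearMap.id ℝ E)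
    (μ : ℝ) (hμ : ‖Ainv‖ ≤ μ) :
    ‖(w - Ainv (gradient f w)) - wstar‖ ≤
      (μ * L * ((1 - α) ^ 2 + α ^ 2) / 2) * ‖w - wstar‖ ^ 2 := by
  have hwstar : wstar ∈ Metric.closedBall wstar δ :=
    Metric.mem_closedBall_self (dist_nonneg.trans hw)
  have hTaylor := (convex_closedBall wstar δ).norm_image_sub_sub_fderiv_smul_add_smul_le hH hLip
    hwstar hw hα.1 (sub_nonneg.2 hα.2) (add_sub_cancel α 1)
  rw [hgrad0, sub_zero, ← hA] at hTaylor
  have hstep : w - Ainv (gradient f w) - wstar = -Ainv (gradient f w - A (w - wstar)) := by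
    rw [map_sub, ← ContinuousLinearMap.comp_apply, hAinv₁, ContinuousLinearMap.id_apply]
    abel
  calc ‖w - Ainv (gradient f w) - wstar‖ ≤ ‖Ainv‖ * ‖gradient f w - A (w - wstar)‖ := by
        rw [hstep, norm_neg]; exact Ainv.le_opNorm _
    _ ≤ μ * (L * (α ^ 2 + (1 - α) ^ 2) / 2 * ‖w - wstar‖ ^ 2) :=
        mul_le_mul hμ hTaylor (norm_nonneg _) ((norm_nonneg _).trans hμ)
    _ = μ * L * ((1 - α) ^ 2 + α ^ 2) / 2 * ‖w - wstar‖ ^ 2 := by ring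

/-- **One-step quadratic contraction for the generalized Newton update (key step of
Theorem 3).** With `H(u)` the Hessian of `f` at `u` (the derivative of the gradient map,
assumed `L`-Lipschitz in operator norm on the closed ball `B̄(w*, δ)`), `∇f(w*) = 0`,
`α ∈ [0,1]`, and the operator `A = H(αw* + (1−α)w)` invertible with `‖A⁻¹‖ ≤ μ`, the
generalized Newton step `w⁺ = w − A⁻¹(∇f(w))` satisfies
`‖w⁺ − w*‖ ≤ (μL((1−α)² + α²)/2)‖w − w*‖²`. -/
theorem generalized_newton_one_step
    {E : Type*} [NormedAddCommGroup E] [InnerProductSpace ℝ E] [FiniteDimensional ℝ E]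
    (δ : ℝ) (hδ : 0 < δ) (wstar : E) (f : E → ℝ)
    (H : E → E →L[ℝ] E)
    (hH : ∀ u ∈ Metric.closedBall wstar δ, HasFDerivAt (gradient f) (H u) u)
    (hcont : ContinuousOn H (Metric.closedBall wstar δ))
    (hgrad0 : gradient f wstar = 0)
    (L : ℝ)
    (hLip : ∀ u ∈ Metric.closedBall wstar δ, ∀ v ∈ Metric.closedBall wstar δ,
      ‖H u - H v‖ ≤ L * ‖u - v‖)
    (α : ℝ) (hα : α ∈ Set.Icc (0 : ℝ) 1)
    (w : E) (hw : w ∈ Metric.closedBall wstar δ)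
    (A : E →L[ℝ] E) (hA : A = H (α • wstar + (1 - α) • w))
    (Ainv : E →L[ℝ] E)
    (hAinv₁ : Ainv.comp A = ContinuousLinearMap.id ℝ E)
    (hAinv₂ : A.comp Ainv = ContinuousLinearMap.id ℝ E)
    (μ : ℝ) (hμ : ‖Ainv‖ ≤ μ) :
    ‖(w - Ainv (gradient f w)) - wstar‖ ≤
      (μ * L * ((1 - α) ^ 2 + α ^ 2) / 2) * ‖w - wstar‖ ^ 2 :=
  generalized_newton_one_step_general δ wstar f H hH hgrad0 L hLip α hα w hw A hA Ainv hAinv₁ μ hμ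
end

section
/- Super-exponential teachability (Theorem 3). Let E be a finite-dimensional real inner product space, δ > 0, w* ∈ E, and let f : E → ℝ be twice continuously differentiable on the closed ball B̄(w*, δ) with ∇f(w*) = 0. Let H(u) be the Hessian of f at u (the derivative of the gradient map), assume H is L-Lipschitz in operator norm on B̄(w*, δ), fix α ∈ [0,1], and assume that for every u ∈ B̄(w*, δ) the operator H(αw* + (1−α)u) is invertible with ‖(H(αw* + (1−α)u))^{-1}‖ ≤ μ. Set q = μL((1−α)² + α²)/2 and assume qδ < 1. For any w^0 ∈ B̄(w*, δ) define the iterates w^{t+1} = w^t − (H(αw* + (1−α)w^t))^{-1}(∇f(w^t)). Then every iterate remains in B̄(w*, δ), and for every T ≥ 0, ‖w^T − w*‖ ≤ (q‖w^0 − w*‖)^{2^T − 1} ‖w^0 − w*‖; in particular the convergence to w* is quadratic (super-exponential teachability). -/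
/-!
Write `e = u - w*`. The fundamental theorem of calculus along the segment `[w*, u]` gives
`∇f(u) = ∫₀¹ H(w* + s e) e ds`, while the step uses the Hessian at the point `w* + (1 - α) e`
of the same segment. Lipschitz continuity of `H` bounds the discrepancy by
`L ‖e‖² ∫₀¹ |1 - α - s| ds = L ‖e‖² ((1 - α)² + α²) / 2`, so one step `u ↦ u⁺` satisfies
`‖u⁺ - w*‖ ≤ q ‖u - w*‖²`. Since `qδ < 1` this never increases the distance to `w*`, and
squaring the bound at every step produces the exponent `2^T - 1`.
-/

open Set

theorem integral_zero_one_abs_sub {β : ℝ} (hβ : β ∈ Icc (0 : ℝ) 1) :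
    ∫ s in (0 : ℝ)..1, |β - s| = β ^ 2 / 2 + (1 - β) ^ 2 / 2 := by
  have hint : ∀ a b : ℝ, IntervalIntegrable (fun s => |β - s|) MeasureTheory.volume a b :=
    fun a b => (continuous_const.sub continuous_id).abs.intervalIntegrable a b
  have hleft : ∫ s in (0 : ℝ)..β, |β - s| = β ^ 2 / 2 := by
    rw [intervalIntegral.integral_congr (g := fun s => β - s) fun s hs => by
      rw [uIcc_of_le hβ.1] at hs; exact abs_of_nonneg (by linarith [hs.2])]
    rw [intervalIntegral.integral_sub intervalIntegrable_const
      intervalIntegral.intervalIntegrable_id]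
    simp only [intervalIntegral.integral_const, sub_zero, smul_eq_mul, integral_id,
      zero_pow two_ne_zero]
    ring
  have hright : ∫ s in β..(1 : ℝ), |β - s| = (1 - β) ^ 2 / 2 := by
    rw [intervalIntegral.integral_congr (g := fun s => s - β) fun s hs => by
      rw [uIcc_of_le hβ.2] at hs; exact abs_of_nonpos (by linarith [hs.1]) |>.trans (neg_sub _ _)]
    rw [intervalIntegral.integral_sub intervalIntegral.intervalIntegrable_id
      intervalIntegrable_const]
    simp only [integral_id, one_pow, intervalIntegral.integral_const, smul_eq_mul]
    ring
  rw [← intervalIntegral.integral_add_adjacent_intervals (hint 0 β) (hint β 1), hleft, hright]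

section Segment

variable {E F : Type*} [NormedAddCommGroup E] [NormedSpace ℝ E]
  [NormedAddCommGroup F] [NormedSpace ℝ F]
  {s : Set E} {g : E → F} {H : E → E →L[ℝ] F} {L : ℝ} {x y : E}

variable [CompleteSpace F]

theorem Convex.integral_apply_eq_sub (hs : Convex ℝ s) (hx : x ∈ s) (hy : y ∈ s)
    (hg : ∀ u ∈ s, HasFDerivAt g (H u) u) (hH : ContinuousOn H s) :
    ∫ t in (0 : ℝ)..1, H (x + t • (y - x)) (y - x) = g y - g x := by
  have hmem : ∀ t ∈ Icc (0 : ℝ) 1, x + t • (y - x) ∈ s := fun t ht =>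
    hs.add_smul_sub_mem hx hy ht
  have hderiv : ∀ t ∈ uIcc (0 : ℝ) 1,
      HasDerivAt (fun t : ℝ => g (x + t • (y - x))) (H (x + t • (y - x)) (y - x)) t := by
    intro t ht
    rw [uIcc_of_le zero_le_one] at ht
    have hline : HasDerivAt (fun t : ℝ => x + t • (y - x)) (y - x) t := by
      simpa using ((hasDerivAt_id t).smul_const (y - x)).const_add x
    exact (hg _ (hmem t ht)).comp_hasDerivAt t hline
  have hcont : ContinuousOn (fun t : ℝ => H (x + t • (y - x)) (y - x)) (uIcc 0 1) := by
    rw [uIcc_of_le zero_le_one]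
    exact (hH.comp (by fun_prop) hmem).clm_apply continuousOn_const
  rw [intervalIntegral.integral_eq_sub_of_hasDerivAt hderiv hcont.intervalIntegrable]
  simp

theorem Convex.norm_apply_sub_sub_le (hs : Convex ℝ s) (hx : x ∈ s) (hy : y ∈ s)
    (hg : ∀ u ∈ s, HasFDerivAt g (H u) u)
    (hLip : ∀ u ∈ s, ∀ v ∈ s, ‖H u - H v‖ ≤ L * ‖u - v‖) {α : ℝ} (hα : α ∈ Icc (0 : ℝ) 1) :
    ‖H (α • x + (1 - α) • y) (y - x) - (g y - g x)‖ ≤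
      L * ((1 - α) ^ 2 + α ^ 2) / 2 * ‖y - x‖ ^ 2 := by
  set e := y - x
  set p := α • x + (1 - α) • y
  have hp : p ∈ s := hs hx hy hα.1 (sub_nonneg.2 hα.2) (by ring)
  have hmem : ∀ t ∈ Icc (0 : ℝ) 1, x + t • e ∈ s := fun t ht => hs.add_smul_sub_mem hx hy ht
  have hH : ContinuousOn H s := (LipschitzOnWith.of_dist_le' (K := L) fun u hu v hv => by
    simpa only [dist_eq_norm] using hLip u hu v hv).continuousOn
  have hcont : ContinuousOn (fun t : ℝ => H (x + t • e) e) (Icc 0 1) :=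
    (hH.comp (by fun_prop) hmem).clm_apply continuousOn_const
  have hbound : ∀ t ∈ Icc (0 : ℝ) 1,
      ‖H p e - H (x + t • e) e‖ ≤ L * ‖e‖ ^ 2 * |(1 - α) - t| := by
    intro t ht
    calc ‖H p e - H (x + t • e) e‖ ≤ ‖H p - H (x + t • e)‖ * ‖e‖ :=
          (H p - H (x + t • e)).le_opNorm e
      _ ≤ L * ‖p - (x + t • e)‖ * ‖e‖ := by gcongr; exact hLip _ hp _ (hmem t ht)
      _ = L * ‖e‖ ^ 2 * |(1 - α) - t| := by
          rw [show p - (x + t • e) = ((1 - α) - t) • e by simp only [p, e]; module, norm_smul,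
            Real.norm_eq_abs]
          ring
  have hint : IntervalIntegrable (fun t : ℝ => H (x + t • e) e) MeasureTheory.volume 0 1 :=
    hcont.intervalIntegrable_of_Icc zero_le_one
  have hint' : IntervalIntegrable (fun t : ℝ => L * ‖e‖ ^ 2 * |(1 - α) - t|)
      MeasureTheory.volume 0 1 :=
    (continuous_const.mul (continuous_const.sub continuous_id).abs).intervalIntegrable 0 1
  rw [← hs.integral_apply_eq_sub hx hy hg hH]
  calc ‖H p e - ∫ t in (0 : ℝ)..1, H (x + t • e) e‖
      = ‖∫ t in (0 : ℝ)..1, (H p e - H (x + t • e) e)‖ := by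
        rw [intervalIntegral.integral_sub intervalIntegrable_const hint]
        simp
    _ ≤ ∫ t in (0 : ℝ)..1, ‖H p e - H (x + t • e) e‖ :=
        intervalIntegral.norm_integral_le_integral_norm zero_le_one
    _ ≤ ∫ t in (0 : ℝ)..1, L * ‖e‖ ^ 2 * |(1 - α) - t| :=
        intervalIntegral.integral_mono_on zero_le_one (intervalIntegrable_const.sub hint).norm
          hint' hbound
    _ = L * ((1 - α) ^ 2 + α ^ 2) / 2 * ‖e‖ ^ 2 := by
        rw [intervalIntegral.integral_const_mul,
          integral_zero_one_abs_sub ⟨sub_nonneg.2 hα.2, by linarith [hα.1]⟩]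
        ring

theorem Convex.norm_newton_update_sub_le (hs : Convex ℝ s) (hx : x ∈ s) (hy : y ∈ s)
    (hg : ∀ u ∈ s, HasFDerivAt g (H u) u)
    (hLip : ∀ u ∈ s, ∀ v ∈ s, ‖H u - H v‖ ≤ L * ‖u - v‖) {α : ℝ} (hα : α ∈ Icc (0 : ℝ) 1)
    (hgx : g x = 0) {A : F →L[ℝ] E} {μ : ℝ}
    (hA : A.comp (H (α • x + (1 - α) • y)) = ContinuousLinearMap.id ℝ E) (hAμ : ‖A‖ ≤ μ) :
    ‖y - A (g y) - x‖ ≤ μ * L * ((1 - α) ^ 2 + α ^ 2) / 2 * ‖y - x‖ ^ 2 := by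
  set p := α • x + (1 - α) • y
  have hid : y - A (g y) - x = A (H p (y - x) - (g y - g x)) := by
    rw [hgx, sub_zero, map_sub, ← ContinuousLinearMap.comp_apply, hA,
      ContinuousLinearMap.id_apply]
    abel
  calc ‖y - A (g y) - x‖ ≤ ‖A‖ * ‖H p (y - x) - (g y - g x)‖ := hid ▸ A.le_opNorm _
    _ ≤ μ * (L * ((1 - α) ^ 2 + α ^ 2) / 2 * ‖y - x‖ ^ 2) :=
        mul_le_mul hAμ (hs.norm_apply_sub_sub_le hx hy hg hLip hα) (norm_nonneg _)
          ((norm_nonneg _).trans hAμ)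
    _ = μ * L * ((1 - α) ^ 2 + α ^ 2) / 2 * ‖y - x‖ ^ 2 := by ring

end Segment

theorem le_pow_two_pow_sub_one_mul_of_le_mul_sq {r : ℕ → ℝ} {q : ℝ} (hr : ∀ t, 0 ≤ r t)
    (h : ∀ t, r (t + 1) ≤ q * r t ^ 2) (T : ℕ) : r T ≤ (q * r 0) ^ (2 ^ T - 1) * r 0 := by
  rcases lt_or_ge q 0 with hq | hq
  · have hsucc : ∀ t, r (t + 1) = 0 := fun t =>
      le_antisymm ((h t).trans (mul_nonpos_of_nonpos_of_nonneg hq.le (sq_nonneg _))) (hr _)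
    have hzero : r 0 = 0 := by
      by_contra hne
      have := mul_neg_of_neg_of_pos hq (pow_pos ((hr 0).lt_of_ne' hne) 2)
      linarith [hsucc 0 ▸ h 0]
    cases T <;> simp [hsucc, hzero]
  induction T with
  | zero => simp
  | succ T ih =>
    have hexp : 2 ^ (T + 1) - 1 = 2 * (2 ^ T - 1) + 1 := by
      have := Nat.one_le_two_pow (n := T)
      rw [pow_succ]
      omega
    calc r (T + 1) ≤ q * r T ^ 2 := h T
      _ ≤ q * ((q * r 0) ^ (2 ^ T - 1) * r 0) ^ 2 := by gcongr; exact hr T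
      _ = (q * r 0) ^ (2 ^ (T + 1) - 1) * r 0 := by rw [hexp]; ring

theorem super_exponential_teachability_general
    {E : Type*} [NormedAddCommGroup E] [InnerProductSpace ℝ E] [FiniteDimensional ℝ E]
    (δ : ℝ) (wstar : E) (f : E → ℝ)
    (H : E → E →L[ℝ] E)
    (hH : ∀ u ∈ Metric.closedBall wstar δ, HasFDerivAt (gradient f) (H u) u)
    (hgrad0 : gradient f wstar = 0)
    (L : ℝ)
    (hLip : ∀ u ∈ Metric.closedBall wstar δ, ∀ v ∈ Metric.closedBall wstar δ,
      ‖H u - H v‖ ≤ L * ‖u - v‖)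
    (α : ℝ) (hα : α ∈ Set.Icc (0 : ℝ) 1)
    (Hinv : E → E →L[ℝ] E)
    (hinv₁ : ∀ u ∈ Metric.closedBall wstar δ,
      (Hinv u).comp (H (α • wstar + (1 - α) • u)) = ContinuousLinearMap.id ℝ E)
    (μ : ℝ) (hμ : ∀ u ∈ Metric.closedBall wstar δ, ‖Hinv u‖ ≤ μ)
    (q : ℝ) (hq : q = μ * L * ((1 - α) ^ 2 + α ^ 2) / 2) (hqδ : q * δ < 1)
    (w0 : E) (hw0mem : w0 ∈ Metric.closedBall wstar δ)
    (w : ℕ → E) (hw0 : w 0 = w0)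
    (hwS : ∀ t : ℕ, w (t + 1) = w t - Hinv (w t) (gradient f (w t))) :
    (∀ t : ℕ, w t ∈ Metric.closedBall wstar δ) ∧
      ∀ T : ℕ, ‖w T - wstar‖ ≤
        (q * ‖w0 - wstar‖) ^ (2 ^ T - 1) * ‖w0 - wstar‖ := by
  have hstar : wstar ∈ Metric.closedBall wstar δ :=
    Metric.mem_closedBall_self (dist_nonneg.trans hw0mem)
  have hstep : ∀ u ∈ Metric.closedBall wstar δ,
      ‖u - Hinv u (gradient f u) - wstar‖ ≤ q * ‖u - wstar‖ ^ 2 := fun u hu =>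
    hq ▸ (convex_closedBall wstar δ).norm_newton_update_sub_le hstar hu hH hLip hα hgrad0
      (hinv₁ u hu) (hμ u hu)
  have hmem : ∀ t, w t ∈ Metric.closedBall wstar δ := by
    intro t
    induction t with
    | zero => rwa [hw0]
    | succ t ih =>
      have hnext := hwS t ▸ hstep _ ih
      rw [mem_closedBall_iff_norm] at ih ⊢
      have hr := norm_nonneg (w t - wstar)
      rcases le_total 0 q with hq0 | hq0
      · nlinarith [mul_le_mul_of_nonneg_left ih hq0]
      · nlinarith [sq_nonneg ‖w t - wstar‖]
  refine ⟨hmem, fun T => ?_⟩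
  simpa only [hw0] using le_pow_two_pow_sub_one_mul_of_le_mul_sq (r := fun t => ‖w t - wstar‖)
    (fun t => norm_nonneg _) (fun t => hwS t ▸ hstep _ (hmem t)) T

/-- **Super-exponential teachability (Theorem 3).** With `H(u)` the Hessian of `f` at `u`
(the derivative of the gradient map, assumed `L`-Lipschitz in operator norm on the closed
ball `B̄(w*, δ)`), `∇f(w*) = 0`, `α ∈ [0,1]`, each operator `H(αw* + (1−α)u)` invertible
with inverse of norm at most `μ`, `q = μL((1−α)² + α²)/2` and `qδ < 1`, the generalized
Newton iterates `w^{t+1} = w^t − (H(αw* + (1−α)w^t))⁻¹(∇f(w^t))` started from any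
`w^0 ∈ B̄(w*, δ)` remain in the ball and satisfy
`‖w^T − w*‖ ≤ (q‖w^0 − w*‖)^(2^T − 1) ‖w^0 − w*‖` (quadratic convergence). -/
theorem super_exponential_teachability
    {E : Type*} [NormedAddCommGroup E] [InnerProductSpace ℝ E] [FiniteDimensional ℝ E]
    (δ : ℝ) (hδ : 0 < δ) (wstar : E) (f : E → ℝ)
    (H : E → E →L[ℝ] E)
    (hH : ∀ u ∈ Metric.closedBall wstar δ, HasFDerivAt (gradient f) (H u) u)
    (hcont : ContinuousOn H (Metric.closedBall wstar δ))
    (hgrad0 : gradient f wstar = 0)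
    (L : ℝ)
    (hLip : ∀ u ∈ Metric.closedBall wstar δ, ∀ v ∈ Metric.closedBall wstar δ,
      ‖H u - H v‖ ≤ L * ‖u - v‖)
    (α : ℝ) (hα : α ∈ Set.Icc (0 : ℝ) 1)
    (Hinv : E → E →L[ℝ] E)
    (hinv₁ : ∀ u ∈ Metric.closedBall wstar δ,
      (Hinv u).comp (H (α • wstar + (1 - α) • u)) = ContinuousLinearMap.id ℝ E)
    (hinv₂ : ∀ u ∈ Metric.closedBall wstar δ,
      (H (α • wstar + (1 - α) • u)).comp (Hinv u) = ContinuousLinearMap.id ℝ E)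
    (μ : ℝ) (hμ : ∀ u ∈ Metric.closedBall wstar δ, ‖Hinv u‖ ≤ μ)
    (q : ℝ) (hq : q = μ * L * ((1 - α) ^ 2 + α ^ 2) / 2) (hqδ : q * δ < 1)
    (w0 : E) (hw0mem : w0 ∈ Metric.closedBall wstar δ)
    (w : ℕ → E) (hw0 : w 0 = w0)
    (hwS : ∀ t : ℕ, w (t + 1) = w t - Hinv (w t) (gradient f (w t))) :
    (∀ t : ℕ, w t ∈ Metric.closedBall wstar δ) ∧
      ∀ T : ℕ, ‖w T - wstar‖ ≤
        (q * ‖w0 - wstar‖) ^ (2 ^ T - 1) * ‖w0 - wstar‖ :=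
  super_exponential_teachability_general δ wstar f H hH hgrad0 L hLip α hα Hinv hinv₁ μ hμ q hq hqδ
    w0 hw0mem w hw0 hwS
end

section
/- Closed-form optimal synthesized label for the least-squares learner (Equation 3). Let E be a real inner product space, x ∈ E with x ≠ 0, η > 0, and w, w* ∈ E. For a synthesized scalar label y ∈ ℝ, the least-squares gradient step is w⁺(y) = w − η(⟨w, x⟩ − y)x, and the teacher's objective is F(y) = ‖w⁺(y) − w*‖². Then F is uniquely minimized over ℝ at y* = (1 − λ)⟨w, x⟩ + λ⟨w*, x⟩, where λ = 1/(η‖x‖²); that is, F(y*) ≤ F(y) for all y ∈ ℝ, with equality only at y = y*. In particular, the optimal synthesized label is a convex-type combination of the learner's current prediction ⟨w, x⟩ and the optimal model's prediction ⟨w*, x⟩. -/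
open scoped RealInnerProductSpace

/-! The updated model minus the target is `(w - w*) - c • x` with `c = η (⟪w, x⟫ - y)`, so the
teacher's objective is the squared distance from `w - w*` to a point of the line `ℝ x`.  This is
a quadratic in `c` minimised exactly at the projection coefficient `⟪w - w*, x⟫ / ‖x‖²`, and
since `y ↦ c` is an affine bijection (as `η ≠ 0`) that coefficient is attained at `y = y*`. -/

theorem norm_sub_smul_sq_eq_add_sq {E : Type*} [NormedAddCommGroup E] [InnerProductSpace ℝ E]
    {x : E} (hx : x ≠ 0) (u : E) (c : ℝ) :
    ‖u - c • x‖ ^ 2 =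
      ‖u - (⟪u, x⟫ / ‖x‖ ^ 2) • x‖ ^ 2 + ‖x‖ ^ 2 * (c - ⟪u, x⟫ / ‖x‖ ^ 2) ^ 2 := by
  have hx2 : ‖x‖ ^ 2 ≠ 0 := by positivity
  simp only [norm_sub_sq_real, real_inner_smul_right, norm_smul, mul_pow, Real.norm_eq_abs,
    sq_abs]
  field_simp
  ring

/-- **Closed-form optimal synthesized label for the least-squares learner (Equation 3).**
For the least-squares gradient step `w⁺(y) = w − η(⟨w,x⟩ − y)x` and teacher objective
`F(y) = ‖w⁺(y) − w*‖²`, the unique minimizer over `y ∈ ℝ` is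
`y* = (1 − λ)⟨w,x⟩ + λ⟨w*,x⟩` with `λ = 1/(η‖x‖²)`. -/
theorem lsr_optimal_synthesized_label
    {E : Type*} [NormedAddCommGroup E] [InnerProductSpace ℝ E]
    (x : E) (hx : x ≠ 0) (η : ℝ) (hη : 0 < η) (w wstar : E)
    (F : ℝ → ℝ)
    (hF : ∀ y : ℝ, F y = ‖(w - (η * (⟪w, x⟫ - y)) • x) - wstar‖ ^ 2)
    (lam ystar : ℝ)
    (hlam : lam = 1 / (η * ‖x‖ ^ 2))
    (hystar : ystar = (1 - lam) * ⟪w, x⟫ + lam * ⟪wstar, x⟫) :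
    (∀ y : ℝ, F ystar ≤ F y) ∧ ∀ y : ℝ, F y = F ystar → y = ystar := by
  have hF' : ∀ y, F y = ‖(w - wstar) - (η * (⟪w, x⟫ - y)) • x‖ ^ 2 := fun y => by
    rw [hF]; congr 2; abel
  have hcoeff : η * (⟪w, x⟫ - ystar) = ⟪w - wstar, x⟫ / ‖x‖ ^ 2 := by
    rw [hystar, hlam, inner_sub_left]
    field_simp
    ring
  have key : ∀ y, F y = F ystar + ‖x‖ ^ 2 * (η * (y - ystar)) ^ 2 := fun y => by
    rw [hF', hF', norm_sub_smul_sq_eq_add_sq hx, norm_sub_smul_sq_eq_add_sq hx (c := η * _),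
      ← hcoeff]
    ring
  refine ⟨fun y => ?_, fun y hy => ?_⟩
  · rw [key y]
    exact le_add_of_nonneg_right (by positivity)
  · rw [key y, add_eq_left] at hy
    simpa [hx, hη.ne', sub_eq_zero] using hy
end
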